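/- Under Assumptions 1, 2, 3 and 4, the gradient error of the IN method satisfies, for all k ≥ 2, ‖e^k‖ ≤ C·(γ^k + 1/k)·B^k(φ)·‖∇f(x_1^k)‖, where B^k(φ) = Σ_{j=2}^m B_j^k(φ) and B_j^k(φ) is defined by B_1^k(φ) = 0 and B_{i+1}^k(φ) = (1 + (2Q/m)·max(1/k, φ))·B_i^k(φ) + 2M/(cm). -/

import Mathlib

open Finset Filter Classical

noncomputable def Bseq (r s : ℝ) : ℕ → ℝ
  | 0 => 0
  | (i+1) => r * Bseq r s i + s

/-!
The aggregated Hessian `H_i^k` is a sum of `(k - 1) m + i` Hessians, so `c I ⪯ ∇²f_i ⪯ C I`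
squeezes it between `((k - 1) m + i) c I` and `((k - 1) m + i) C I`. For `k ≥ 2` this gives
`‖(H_i^k)⁻¹‖ ≤ 2 / (k m c)` and `α_*^k ≤ 2 (1 - η) k ≤ φ k`, hence `γ^k ≤ max (1/k, φ)`.
Each inner step then moves the iterate by at most
`(2Q/m) γ^k ‖x_i^k - x_1^k‖ + γ^k (2M/(cm)) ‖∇f(x_1^k)‖` (the gradient of `f_i` at `x_i^k` being
controlled by Assumption 4 at `x_1^k` and the `C`-Lipschitz continuity of `∇f_i`), so by induction
`‖x_i^k - x_1^k‖ ≤ γ^k B_i^k(φ) ‖∇f(x_1^k)‖`. Each summand of `e^k` is at most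
`C (1 + 1/α^k) ‖x_j^k - x_1^k‖`, and `C (1 + 1/α^k) γ^k = C (γ^k + 1/k)`.
-/

open scoped MatrixOrder

namespace ContinuousLinearMap

variable {E : Type*} [NormedAddCommGroup E] [InnerProductSpace ℝ E]

theorem norm_le_of_isPositive_of_inner_le {T : E →L[ℝ] E} (hT : T.IsPositive) {b : ℝ}
    (hb : 0 ≤ b) (h : ∀ x, inner ℝ (T x) x ≤ b * ‖x‖ ^ 2) : ‖T‖ ≤ b := by
  rw [norm_eq_iSup_rayleighQuotient T hT.isSymmetric]
  refine ciSup_le fun x => ?_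
  rw [rayleighQuotient, reApplyInnerSelf_apply, RCLike.re_to_real,
    abs_of_nonneg (div_nonneg (hT.inner_nonneg_left x) (sq_nonneg _))]
  exact div_le_of_le_mul₀ (sq_nonneg _) hb (h x)

theorem mul_norm_le_norm_apply_of_le_inner {T : E →L[ℝ] E} {a : ℝ}
    (h : ∀ x, a * ‖x‖ ^ 2 ≤ inner ℝ (T x) x) (x : E) : a * ‖x‖ ≤ ‖T x‖ := by
  rcases eq_or_ne x 0 with rfl | hx
  · simp
  have := (h x).trans (real_inner_le_norm _ _)
  nlinarith [norm_pos_iff.2 hx]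

end ContinuousLinearMap

namespace Matrix

variable {n : Type*} [Fintype n] [DecidableEq n]

theorem isPositive_toEuclideanCLM_iff {A : Matrix n n ℝ} :
    (toEuclideanCLM (𝕜 := ℝ) A).IsPositive ↔ A.PosSemidef := by
  rw [← ContinuousLinearMap.isPositive_toLinearMap_iff, coe_toEuclideanCLM_eq_toEuclideanLin,
    isPositive_toEuclideanLin_iff]

theorem inner_toEuclideanCLM_smul_one (b : ℝ) (x : EuclideanSpace ℝ n) :
    inner ℝ (toEuclideanCLM (𝕜 := ℝ) (b • 1 : Matrix n n ℝ) x) x = b * ‖x‖ ^ 2 := by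
  simp [real_inner_smul_left]

theorem inner_toEuclideanCLM_le_of_le {A B : Matrix n n ℝ} (h : A ≤ B) (x : EuclideanSpace ℝ n) :
    inner ℝ (toEuclideanCLM (𝕜 := ℝ) A x) x ≤ inner ℝ (toEuclideanCLM (𝕜 := ℝ) B x) x := by
  have := (isPositive_toEuclideanCLM_iff.2 h).inner_nonneg_left x
  rwa [map_sub, _root_.sub_apply, inner_sub_left, sub_nonneg] at this

theorem norm_toEuclideanCLM_le {A : Matrix n n ℝ} {b : ℝ} (hb : 0 ≤ b) (h0 : 0 ≤ A)
    (h : A ≤ b • 1) : ‖toEuclideanCLM (𝕜 := ℝ) A‖ ≤ b :=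
  ContinuousLinearMap.norm_le_of_isPositive_of_inner_le
    (isPositive_toEuclideanCLM_iff.2 (nonneg_iff_posSemidef.1 h0)) hb fun x =>
      (inner_toEuclideanCLM_le_of_le h x).trans_eq (inner_toEuclideanCLM_smul_one b x)

theorem norm_toEuclideanCLM_inv_apply_le {A : Matrix n n ℝ} {a : ℝ} (ha : 0 < a)
    (h : a • 1 ≤ A) (v : EuclideanSpace ℝ n) :
    ‖toEuclideanCLM (𝕜 := ℝ) A⁻¹ v‖ ≤ a⁻¹ * ‖v‖ := by
  have hA : A.PosDef := by
    simpa using PosDef.posSemidef_add (le_iff.1 h) (PosDef.one.smul ha)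
  have hv : toEuclideanCLM (𝕜 := ℝ) A (toEuclideanCLM (𝕜 := ℝ) A⁻¹ v) = v := by
    rw [← mul_apply_eq_comp, ← map_mul, mul_nonsing_inv _ ((isUnit_iff_isUnit_det A).1 hA.isUnit),
      map_one, one_apply_eq_self]
  rw [le_inv_mul_iff₀ ha]
  refine (ContinuousLinearMap.mul_norm_le_norm_apply_of_le_inner (fun x => ?_) _).trans_eq
    (congrArg norm hv)
  exact (inner_toEuclideanCLM_smul_one a x).symm.trans_le (inner_toEuclideanCLM_le_of_le h x)

theorem norm_toEuclideanCLM_inv_apply_le_two_div {A : Matrix n n ℝ} {c : ℝ} (hc : 0 < c)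
    {k m i : ℕ} (hk : 2 ≤ k) (hi : i ∈ Icc 1 m) (h : ((((k - 1) * m + i : ℕ) : ℝ) * c) • 1 ≤ A)
    (v : EuclideanSpace ℝ n) : ‖toEuclideanCLM (𝕜 := ℝ) A⁻¹ v‖ ≤ 2 / (k * m * c) * ‖v‖ := by
  obtain ⟨hi1, him⟩ := mem_Icc.1 hi
  have hkm : (0 : ℝ) < k * m * c :=
    mul_pos (by exact_mod_cast Nat.mul_pos (by omega) (by omega)) hc
  have hcount : (k * m * c : ℝ) / 2 ≤ ((k - 1) * m + i : ℕ) * c := by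
    have hk2 : (2 : ℝ) ≤ k := by exact_mod_cast hk
    push_cast [Nat.cast_sub (by omega : 1 ≤ k)]
    nlinarith [mul_nonneg (mul_nonneg (sub_nonneg.2 hk2) m.cast_nonneg) hc.le,
      mul_nonneg i.cast_nonneg hc.le]
  refine (norm_toEuclideanCLM_inv_apply_le (by linarith) h v).trans
    (mul_le_mul_of_nonneg_right ?_ (norm_nonneg v))
  rw [← inv_div]
  exact inv_anti₀ (by positivity) hcount

theorem stepsize_le {A : Matrix n n ℝ} {d : EuclideanSpace ℝ n} {S C η K μ : ℝ} (hμ : 0 < μ)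
    (hC : 0 < C) (hη : η ≤ 1) (hS : 0 ≤ S) (hK : 0 ≤ K) (hA0 : 0 ≤ A)
    (hA : A ≤ (K * μ * C) • 1) :
    (1 - η) / C * inner ℝ d (toEuclideanCLM (𝕜 := ℝ) A d) / (‖d‖ * S + μ / 2 * ‖d‖ ^ 2)
      ≤ 2 * (1 - η) * K := by
  rcases eq_or_ne d 0 with rfl | hd
  · simp only [map_zero, inner_zero_left, mul_zero, zero_div]
    nlinarith
  have hq : inner ℝ d (toEuclideanCLM (𝕜 := ℝ) A d) ≤ K * μ * C * ‖d‖ ^ 2 := by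
    rw [real_inner_comm, ← inner_toEuclideanCLM_smul_one]
    exact inner_toEuclideanCLM_le_of_le hA d
  have hq0 : 0 ≤ inner ℝ d (toEuclideanCLM (𝕜 := ℝ) A d) := by
    simpa [real_inner_comm] using inner_toEuclideanCLM_le_of_le hA0 d
  have hη' : 0 ≤ 1 - η := by linarith
  calc (1 - η) / C * inner ℝ d (toEuclideanCLM (𝕜 := ℝ) A d) / (‖d‖ * S + μ / 2 * ‖d‖ ^ 2)
      ≤ (1 - η) / C * (K * μ * C * ‖d‖ ^ 2) / (μ / 2 * ‖d‖ ^ 2) := by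
        gcongr
        exact le_add_of_nonneg_left (by positivity)
    _ = 2 * (1 - η) * K := by field_simp

theorem div_le_max_of_le_max_stepsize {A : Matrix n n ℝ} {d : EuclideanSpace ℝ n} {P : Prop}
    [Decidable P] {k m : ℕ} {S c C η α β : ℝ} (hk : 0 < k) (hm : 0 < m) (hc : 0 < c)
    (hcC : c ≤ C) (hη : η < 1) (hS : 0 ≤ S) (hA0 : 0 ≤ A) (hA : A ≤ ((k : ℝ) * m * C) • 1)
    (hβ : β = if P then (1 - η) / C * inner ℝ d (toEuclideanCLM (𝕜 := ℝ) A d) /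
      (‖d‖ * S + (m : ℝ) / 2 * ‖d‖ ^ 2) else 0)
    (hα : α ≤ max 1 β) : α / k ≤ max (1 / (k : ℝ)) (2 * (1 - η) * (C / c)) := by
  have hk' : (0 : ℝ) < k := by exact_mod_cast hk
  have hη' : 0 ≤ 2 * (1 - η) := by linarith
  have hβk : β ≤ 2 * (1 - η) * (C / c) * k := by
    rw [hβ]
    split_ifs
    · refine (stepsize_le (by exact_mod_cast hm) (hc.trans_le hcC) hη.le hS hk'.le hA0 hA).trans ?_
      have hCc : 1 ≤ C / c := (one_le_div hc).2 hcC
      nlinarith [mul_le_mul_of_nonneg_left hCc (mul_nonneg hη' hk'.le)]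
    · have : 0 ≤ C / c := div_nonneg (hc.le.trans hcC) hc.le
      positivity
  calc α / k ≤ max 1 (2 * (1 - η) * (C / c) * k) / k := by grw [hα, hβk]
    _ = max (1 / (k : ℝ)) (2 * (1 - η) * (C / c)) := by
        rw [← max_div_div_right hk'.le, mul_div_cancel_right₀ _ hk'.ne']

end Matrix

theorem nsmul_le_of_incremental_sum {A : Type*} [AddCommMonoid A] [Preorder A]
    [IsOrderedAddMonoid A] {m : ℕ} {H h : ℕ → ℕ → A} {L : A}
    (h0 : H 1 0 = 0) (hnext : ∀ k, 1 ≤ k → H (k + 1) 0 = H k m)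
    (hrec : ∀ k, 1 ≤ k → ∀ i ∈ Icc 1 m, H k i = H k (i - 1) + h k i)
    (hL : ∀ k, 1 ≤ k → ∀ i ∈ Icc 1 m, L ≤ h k i) :
    ∀ k, 1 ≤ k → ∀ i ≤ m, ((k - 1) * m + i) • L ≤ H k i := by
  have within : ∀ k, 1 ≤ k → ((k - 1) * m) • L ≤ H k 0 →
      ∀ i ≤ m, ((k - 1) * m + i) • L ≤ H k i := by
    intro k hk h0k i
    induction i with
    | zero => simpa using h0k
    | succ i ih =>
      intro hi
      rw [hrec k hk (i + 1) (mem_Icc.2 ⟨by omega, hi⟩), Nat.add_sub_cancel, ← add_assoc,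
        succ_nsmul]
      exact add_le_add (ih (by omega)) (hL k hk (i + 1) (mem_Icc.2 ⟨by omega, hi⟩))
  intro k hk
  refine within k hk ?_
  induction k, hk using Nat.le_induction with
  | base => simp [h0]
  | succ k hk ih =>
    have hcount : (k + 1 - 1) * m = (k - 1) * m + m := by
      rw [Nat.add_sub_cancel, ← Nat.succ_mul, Nat.succ_eq_add_one, Nat.sub_add_cancel hk]
    rw [hnext k hk, hcount]
    exact within k hk ih m le_rfl

theorem Matrix.smul_one_le_and_le_smul_one_of_incremental_sum {n : Type*} [Fintype n]
    [DecidableEq n] {m : ℕ} {H h : ℕ → ℕ → Matrix n n ℝ} {c C : ℝ}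
    (h0 : H 1 0 = 0) (hnext : ∀ k, 1 ≤ k → H (k + 1) 0 = H k m)
    (hrec : ∀ k, 1 ≤ k → ∀ i ∈ Icc 1 m, H k i = H k (i - 1) + h k i)
    (hlb : ∀ k, 1 ≤ k → ∀ i ∈ Icc 1 m, c • 1 ≤ h k i)
    (hub : ∀ k, 1 ≤ k → ∀ i ∈ Icc 1 m, h k i ≤ C • 1) (k : ℕ) (hk : 1 ≤ k) (i : ℕ) (hi : i ≤ m) :
    ((((k - 1) * m + i : ℕ) : ℝ) * c) • 1 ≤ H k i ∧
      H k i ≤ ((((k - 1) * m + i : ℕ) : ℝ) * C) • 1 := by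
  simp only [← smul_smul, Nat.cast_smul_eq_nsmul]
  exact ⟨nsmul_le_of_incremental_sum h0 hnext hrec hlb k hk i hi,
    nsmul_le_of_incremental_sum (A := (Matrix n n ℝ)ᵒᵈ) h0 hnext hrec hub k hk i hi⟩

theorem norm_sub_le_mul_Bseq {E : Type*} [SeminormedAddCommGroup E] {y : ℕ → E} {m : ℕ}
    {ρ s t : ℝ} (hρ : 0 ≤ ρ)
    (hstep : ∀ i ∈ Icc 1 m, ‖y (i + 1) - y i‖ ≤ ρ * ‖y i - y 1‖ + t * s) :
    ∀ i ≤ m, ‖y (i + 1) - y 1‖ ≤ t * Bseq (1 + ρ) s i := by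
  intro i
  induction i with
  | zero => simp [Bseq]
  | succ i ih =>
    intro hi
    calc ‖y (i + 1 + 1) - y 1‖ ≤ ‖y (i + 1 + 1) - y (i + 1)‖ + ‖y (i + 1) - y 1‖ :=
          norm_sub_le_norm_sub_add_norm_sub _ _ _
      _ ≤ (1 + ρ) * ‖y (i + 1) - y 1‖ + t * s := by
          linarith [hstep (i + 1) (mem_Icc.2 ⟨by omega, hi⟩)]
      _ ≤ (1 + ρ) * (t * Bseq (1 + ρ) s i) + t * s := by grw [ih (by omega)]
      _ = t * Bseq (1 + ρ) s (i + 1) := by rw [Bseq]; ring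

theorem norm_sub_le_mul_Bseq_of_incremental_newton {n : Type*} [Fintype n] [DecidableEq n]
    {m k : ℕ} {g : ℕ → EuclideanSpace ℝ n → EuclideanSpace ℝ n} {x : ℕ → EuclideanSpace ℝ n}
    {H : ℕ → Matrix n n ℝ} {α c C M G ρ : ℝ} (hk : 2 ≤ k) (hc : 0 < c) (hC : 0 ≤ C)
    (hα : 0 ≤ α) (hρ : α / k ≤ ρ)
    (hiter : ∀ i ∈ Icc 1 m,
      x (i + 1) = x i - α • Matrix.toEuclideanCLM (𝕜 := ℝ) (H i)⁻¹ (g i (x i)))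
    (hH : ∀ i ∈ Icc 1 m, ((((k - 1) * m + i : ℕ) : ℝ) * c) • 1 ≤ H i)
    (hg : ∀ i ∈ Icc 1 m, ‖g i (x i)‖ ≤ M * G + C * ‖x i - x 1‖) :
    ∀ i ≤ m,
      ‖x (i + 1) - x 1‖ ≤ α / k * G * Bseq (1 + 2 * (C / c) / m * ρ) (2 * M / (c * m)) i := by
  have hρ0 : 0 ≤ ρ := (div_nonneg hα k.cast_nonneg).trans hρ
  refine norm_sub_le_mul_Bseq (by positivity) fun i hi => ?_
  obtain ⟨hi1, him⟩ := mem_Icc.1 hi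
  have hm : (0 : ℝ) < m := by exact_mod_cast (by omega : 0 < m)
  have hk' : (0 : ℝ) < k := by exact_mod_cast (by omega : 0 < k)
  rw [hiter i hi, sub_sub_cancel_left, norm_neg, norm_smul, Real.norm_of_nonneg hα]
  calc α * ‖Matrix.toEuclideanCLM (𝕜 := ℝ) (H i)⁻¹ (g i (x i))‖
      ≤ α * (2 / (k * m * c) * (M * G + C * ‖x i - x 1‖)) := by
        grw [Matrix.norm_toEuclideanCLM_inv_apply_le_two_div hc hk hi (hH i hi), hg i hi]
    _ = 2 * (C / c) / m * (α / k) * ‖x i - x 1‖ + α / k * G * (2 * M / (c * m)) := by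
        field_simp
        ring
    _ ≤ 2 * (C / c) / m * ρ * ‖x i - x 1‖ + α / k * G * (2 * M / (c * m)) := by gcongr

theorem norm_sum_sub_add_smul_le {E : Type*} [SeminormedAddCommGroup E] [NormedSpace ℝ E]
    {m : ℕ} {g : ℕ → E → E} {T : ℕ → E →L[ℝ] E} {y : ℕ → E} {a C : ℝ} {b : ℕ → ℝ} (ha : 0 ≤ a)
    (hg : ∀ j ∈ Icc 1 m, ∀ u v, ‖g j u - g j v‖ ≤ C * ‖u - v‖) (hT : ∀ j ∈ Icc 1 m, ‖T j‖ ≤ C)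
    (hy : ∀ j ∈ Icc 1 m, ‖y j - y 1‖ ≤ b j) :
    ‖∑ j ∈ Icc 1 m, (g j (y j) - g j (y 1) + a⁻¹ • T j (y 1 - y j))‖
      ≤ C * (1 + a⁻¹) * ∑ j ∈ Icc 2 m, b j := by
  have hterm : ∀ j ∈ Icc 1 m,
      ‖g j (y j) - g j (y 1) + a⁻¹ • T j (y 1 - y j)‖ ≤ C * (1 + a⁻¹) * ‖y j - y 1‖ := by
    intro j hj
    calc _ ≤ ‖g j (y j) - g j (y 1)‖ + a⁻¹ * (‖T j‖ * ‖y 1 - y j‖) := by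
          grw [norm_add_le, norm_smul, Real.norm_of_nonneg (inv_nonneg.2 ha),
            ContinuousLinearMap.le_opNorm]
      _ ≤ C * ‖y j - y 1‖ + a⁻¹ * (C * ‖y j - y 1‖) := by
          rw [norm_sub_rev (y 1)]
          gcongr
          exacts [hg j hj _ _, hT j hj]
      _ = C * (1 + a⁻¹) * ‖y j - y 1‖ := by ring
  have hsub : Icc 2 m ⊆ Icc 1 m := Icc_subset_Icc_left (by norm_num)
  calc _ ≤ ∑ j ∈ Icc 1 m, C * (1 + a⁻¹) * ‖y j - y 1‖ :=
        (norm_sum_le _ _).trans (sum_le_sum hterm)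
    _ = ∑ j ∈ Icc 2 m, C * (1 + a⁻¹) * ‖y j - y 1‖ := by
        refine (sum_subset hsub fun j hj hj2 => ?_).symm
        obtain rfl : j = 1 := by simp only [mem_Icc] at hj hj2; omega
        simp
    _ ≤ C * (1 + a⁻¹) * ∑ j ∈ Icc 2 m, b j := by
        rw [mul_sum]
        refine sum_le_sum fun j hj => mul_le_mul_of_nonneg_left (hy j (hsub hj)) ?_
        have := (norm_nonneg _).trans (hT j (hsub hj))
        positivity

theorem statement16_general
    (n m : ℕ) (hm : 1 < m)
    (g : ℕ → EuclideanSpace ℝ (Fin n) → EuclideanSpace ℝ (Fin n))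
    (hess : ℕ → EuclideanSpace ℝ (Fin n) → Matrix (Fin n) (Fin n) ℝ)
    (hhess : ∀ i ∈ Finset.Icc 1 m, ∀ y, HasFDerivAt (g i) (Matrix.toEuclideanCLM (𝕜 := ℝ) (hess i y)) y)
    (α : ℕ → ℝ)
    (x : ℕ → ℕ → EuclideanSpace ℝ (Fin n))
    (H : ℕ → ℕ → Matrix (Fin n) (Fin n) ℝ)
    (hH0 : H 1 0 = 0)
    (hHnext : ∀ k, 1 ≤ k → H (k+1) 0 = H k m)
    (hHrec : ∀ k, 1 ≤ k → ∀ i ∈ Finset.Icc 1 m, H k i = H k (i-1) + hess i (x k i))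
    (hiter : ∀ k, 1 ≤ k → ∀ i ∈ Finset.Icc 1 m,
      x k (i+1) = x k i - α k • (Matrix.toEuclideanCLM (𝕜 := ℝ) (H k i)⁻¹) (g i (x k i)))
    (c C : ℝ) (hc : 0 < c) (hcC : c ≤ C)
    (hlb : ∀ i ∈ Finset.Icc 1 m, ∀ y, (hess i y - c • 1).PosSemidef)
    (hub : ∀ i ∈ Finset.Icc 1 m, ∀ y, (C • (1 : Matrix (Fin n) (Fin n) ℝ) - hess i y).PosSemidef)
    (η : ℝ) (hη : η ∈ Set.Ioo (0:ℝ) 1)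
    (αstar : ℕ → ℝ)
    (hαstar : ∀ k, 1 ≤ k → αstar k =
      if x (k+1) 1 ≠ x k 1 then
        ((1 - η)/C) *
          (inner ℝ (x (k+1) 1 - x k 1) ((Matrix.toEuclideanCLM (𝕜 := ℝ) (H k m)) (x (k+1) 1 - x k 1)) : ℝ) /
          (‖x (k+1) 1 - x k 1‖ * (∑ i ∈ Finset.Icc 2 m, ‖x k i - x k 1‖)
            + ((m : ℝ)/2) * ‖x (k+1) 1 - x k 1‖^2)
      else 0)
    (hstep : ∀ k, 1 ≤ k → 1 ≤ α k ∧ α k ≤ max 1 (αstar k))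
    (M : ℝ)
    (hgg : ∀ i ∈ Finset.Icc 1 m, ∀ y, ‖g i y‖ ≤ M * ‖∑ j ∈ Finset.Icc 1 m, g j y‖)
    (Q φ : ℝ) (hQ : Q = C / c) (hφ : φ = 2 * (1 - η) * Q) :
    ∀ k, 2 ≤ k →
      ‖∑ j ∈ Finset.Icc 1 m, (g j (x k j) - g j (x k 1)
          + (α k)⁻¹ • (Matrix.toEuclideanCLM (𝕜 := ℝ) (hess j (x k j))) (x k 1 - x k j))‖ ≤
        C * (α k / k + 1/(k:ℝ)) *
          (∑ j ∈ Finset.Icc 2 m, Bseq (1 + (2*Q/m) * max (1/(k:ℝ)) φ) (2*M/(c*m)) (j-1)) *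
          ‖∑ i ∈ Finset.Icc 1 m, g i (x k 1)‖ := by
  intro k hk
  subst hQ hφ
  have hk1 : 1 ≤ k := by omega
  have hC : 0 < C := hc.trans_le hcC
  have hα : 0 < α k := zero_lt_one.trans_le (hstep k hk1).1
  have hessNorm : ∀ i ∈ Icc 1 m, ∀ y, ‖Matrix.toEuclideanCLM (𝕜 := ℝ) (hess i y)‖ ≤ C :=
    fun i hi y => Matrix.norm_toEuclideanCLM_le hC.le
      ((Matrix.PosSemidef.one.smul hc.le).nonneg.trans (hlb i hi y)) (hub i hi y)
  have hLip : ∀ i ∈ Icc 1 m, ∀ y z, ‖g i y - g i z‖ ≤ C * ‖y - z‖ := fun i hi y z =>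
    convex_univ.norm_image_sub_le_of_norm_hasFDerivWithin_le
      (fun w _ => (hhess i hi w).hasFDerivWithinAt) (fun w _ => hessNorm i hi w)
      (Set.mem_univ z) (Set.mem_univ y)
  have hH := Matrix.smul_one_le_and_le_smul_one_of_incremental_sum hH0 hHnext hHrec
    (fun k _ i hi => hlb i hi (x k i)) (fun k _ i hi => hub i hi (x k i)) k hk1
  have hγ : α k / k ≤ max (1 / (k : ℝ)) (2 * (1 - η) * (C / c)) := by
    obtain ⟨hHm0, hHm⟩ := hH m le_rfl
    rw [← Nat.succ_mul, Nat.succ_eq_add_one, Nat.sub_add_cancel hk1, Nat.cast_mul] at hHm0 hHm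
    exact Matrix.div_le_max_of_le_max_stepsize (by omega) (by omega) hc hcC hη.2
      (sum_nonneg fun _ _ => norm_nonneg _)
      ((Matrix.PosSemidef.one.smul (by positivity)).nonneg.trans hHm0) hHm (hαstar k hk1)
      (hstep k hk1).2
  have hdisp := norm_sub_le_mul_Bseq_of_incremental_newton hk hc hC.le hα.le hγ (hiter k hk1)
    (fun i hi => (hH i (mem_Icc.1 hi).2).1) fun i hi =>
      (norm_le_insert' _ (g i (x k 1))).trans (add_le_add (hgg i hi _) (hLip i hi _ _))
  calc _ ≤ C * (1 + (α k)⁻¹) * ∑ j ∈ Icc 2 m, α k / k * ‖∑ i ∈ Icc 1 m, g i (x k 1)‖ *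
        Bseq (1 + 2 * (C / c) / m * max (1 / (k : ℝ)) (2 * (1 - η) * (C / c))) (2 * M / (c * m))
          (j - 1) :=
        norm_sum_sub_add_smul_le hα.le hLip (fun j hj => hessNorm j hj _) fun j hj => by
          obtain ⟨hj1, hjm⟩ := mem_Icc.1 hj
          simpa [Nat.sub_add_cancel hj1] using hdisp (j - 1) (by omega)
    _ = _ := by
        have h : (1 + (α k)⁻¹) * (α k / k) = α k / k + 1 / k := by field_simp
        rw [← mul_sum, ← h]
        ring

theorem statement16
    (n m : ℕ) (hm : 1 < m)
    (f : ℕ → EuclideanSpace ℝ (Fin n) → ℝ)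
    (g : ℕ → EuclideanSpace ℝ (Fin n) → EuclideanSpace ℝ (Fin n))
    (hess : ℕ → EuclideanSpace ℝ (Fin n) → Matrix (Fin n) (Fin n) ℝ)
    (hgrad : ∀ i ∈ Finset.Icc 1 m, ∀ y, HasGradientAt (f i) (g i y) y)
    (hhess : ∀ i ∈ Finset.Icc 1 m, ∀ y, HasFDerivAt (g i) (Matrix.toEuclideanCLM (𝕜 := ℝ) (hess i y)) y)
    (hcont : ∀ i ∈ Finset.Icc 1 m, Continuous (hess i))
    (α : ℕ → ℝ) (hα : ∀ k, 1 ≤ k → 0 < α k)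
    (x : ℕ → ℕ → EuclideanSpace ℝ (Fin n))
    (H : ℕ → ℕ → Matrix (Fin n) (Fin n) ℝ)
    (hH0 : H 1 0 = 0)
    (hHnext : ∀ k, 1 ≤ k → H (k+1) 0 = H k m)
    (hHrec : ∀ k, 1 ≤ k → ∀ i ∈ Finset.Icc 1 m, H k i = H k (i-1) + hess i (x k i))
    (hxnext : ∀ k, 1 ≤ k → x (k+1) 1 = x k (m+1))
    (hiter : ∀ k, 1 ≤ k → ∀ i ∈ Finset.Icc 1 m,
      x k (i+1) = x k i - α k • (Matrix.toEuclideanCLM (𝕜 := ℝ) (H k i)⁻¹) (g i (x k i)))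
    (X : Set (EuclideanSpace ℝ (Fin n))) (hX : IsCompact X)
    (hbound : ∀ k, 1 ≤ k → ∀ i ∈ Finset.Icc 1 m, x k i ∈ X)
    (c C : ℝ) (hc : 0 < c) (hcC : c ≤ C)
    (hlb : ∀ i ∈ Finset.Icc 1 m, ∀ y, (hess i y - c • 1).PosSemidef)
    (hub : ∀ i ∈ Finset.Icc 1 m, ∀ y, (C • (1 : Matrix (Fin n) (Fin n) ℝ) - hess i y).PosSemidef)
    (η : ℝ) (hη : η ∈ Set.Ioo (0:ℝ) 1)
    (αstar : ℕ → ℝ)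
    (hαstar : ∀ k, 1 ≤ k → αstar k =
      if x (k+1) 1 ≠ x k 1 then
        ((1 - η)/C) *
          (inner ℝ (x (k+1) 1 - x k 1) ((Matrix.toEuclideanCLM (𝕜 := ℝ) (H k m)) (x (k+1) 1 - x k 1)) : ℝ) /
          (‖x (k+1) 1 - x k 1‖ * (∑ i ∈ Finset.Icc 2 m, ‖x k i - x k 1‖)
            + ((m : ℝ)/2) * ‖x (k+1) 1 - x k 1‖^2)
      else 0)
    (hstep : ∀ k, 1 ≤ k → 1 ≤ α k ∧ α k ≤ max 1 (αstar k))
    (M : ℝ) (hM : 0 < M)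
    (hgg : ∀ i ∈ Finset.Icc 1 m, ∀ y, ‖g i y‖ ≤ M * ‖∑ j ∈ Finset.Icc 1 m, g j y‖)
    (Q φ : ℝ) (hQ : Q = C / c) (hφ : φ = 2 * (1 - η) * Q) :
    ∀ k, 2 ≤ k →
      ‖∑ j ∈ Finset.Icc 1 m, (g j (x k j) - g j (x k 1)
          + (α k)⁻¹ • (Matrix.toEuclideanCLM (𝕜 := ℝ) (hess j (x k j))) (x k 1 - x k j))‖ ≤
        C * (α k / k + 1/(k:ℝ)) *
          (∑ j ∈ Finset.Icc 2 m, Bseq (1 + (2*Q/m) * max (1/(k:ℝ)) φ) (2*M/(c*m)) (j-1)) *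
          ‖∑ i ∈ Finset.Icc 1 m, g i (x k 1)‖ :=
  statement16_general n m hm g hess hhess α x H hH0 hHnext hHrec hiter c C hc hcC hlb hub η hη αstar
    hαstar hstep M hgg Q φ hQ hφ
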